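/- For 0 < α₁ < α₂ ≤ 1 and 1 > δ₁ > δ₂ > 0, the weighted Hölder space 𝒞^{α₂}_{δ₂}(ℝ) embeds compactly into 𝒞^{α₁}_{δ₁}(ℝ): every bounded sequence in 𝒞^{α₂}_{δ₂} has a subsequence converging in the 𝒞^{α₁}_{δ₁} norm. -/

import Mathlib

open Filter

/-- `f` lies in the `δ`-weighted `α`-Hölder space with constant `M`. -/
def InWeightedHolder (α δ M : ℝ) (f : ℝ → ℝ) : Prop :=
  (∀ x : ℝ, |f x| ≤ M * (1 + |x|) ^ δ) ∧
  (∀ x y : ℝ, |x - y| ≤ 1 → |f x - f y| ≤ M * (1 + |x|) ^ δ * |x - y| ^ α)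

private lemma one_le_w (x δ : ℝ) (hδ : 0 ≤ δ) : (1:ℝ) ≤ (1 + |x|) ^ δ := by
  calc (1:ℝ) = (1 + |x|) ^ (0:ℝ) := (Real.rpow_zero _).symm
    _ ≤ (1 + |x|) ^ δ :=
      Real.rpow_le_rpow_of_exponent_le (by linarith [abs_nonneg x]) hδ

private lemma w_mono (x : ℝ) {a b : ℝ} (h : a ≤ b) : (1 + |x|) ^ a ≤ (1 + |x|) ^ b :=
  Real.rpow_le_rpow_of_exponent_le (by linarith [abs_nonneg x]) h

private lemma rpow_le_exp_ge {t a b : ℝ} (ht0 : 0 ≤ t) (ht1 : t ≤ 1) (ha : 0 < a)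
    (hab : a ≤ b) : t ^ b ≤ t ^ a := by
  rcases eq_or_lt_of_le ht0 with h | h
  · rw [← h, Real.zero_rpow (by linarith), Real.zero_rpow (ne_of_gt ha)]
  · exact Real.rpow_le_rpow_of_exponent_ge h ht1 hab

private lemma exists_small (a C ε : ℝ) (ha : 0 < a) (hC : 0 ≤ C) (hε : 0 < ε) :
    ∃ h : ℝ, 0 < h ∧ h ≤ 1 ∧ C * h ^ a ≤ ε := by
  refine ⟨min 1 ((ε / (C + 1)) ^ a⁻¹), ?_, min_le_left _ _, ?_⟩
  · exact lt_min one_pos (Real.rpow_pos_of_pos (by positivity) _)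
  · have h0 : (0:ℝ) ≤ min 1 ((ε / (C + 1)) ^ a⁻¹) :=
      le_min zero_le_one (Real.rpow_pos_of_pos (by positivity) _).le
    have h2 : (min 1 ((ε / (C + 1)) ^ a⁻¹)) ^ a ≤ ((ε / (C + 1)) ^ a⁻¹) ^ a :=
      Real.rpow_le_rpow h0 (min_le_right _ _) ha.le
    rw [Real.rpow_inv_rpow (by positivity) (ne_of_gt ha)] at h2
    have hd : C / (C + 1) ≤ 1 := (div_le_one (by positivity)).mpr (by linarith)
    calc C * (min 1 ((ε / (C + 1)) ^ a⁻¹)) ^ a ≤ C * (ε / (C + 1)) :=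
          mul_le_mul_of_nonneg_left h2 hC
      _ = ε * (C / (C + 1)) := by ring
      _ ≤ ε * 1 := mul_le_mul_of_nonneg_left hd hε.le
      _ = ε := mul_one ε

private lemma continuous_of_holder {g : ℝ → ℝ} {α : ℝ} (hα : 0 < α) (C : ℝ → ℝ)
    (h : ∀ x y : ℝ, |x - y| ≤ 1 → |g x - g y| ≤ C x * |x - y| ^ α) : Continuous g := by
  rw [continuous_iff_continuousAt]
  intro x
  rw [ContinuousAt, tendsto_iff_dist_tendsto_zero]
  have hb : Tendsto (fun y : ℝ => C x * |x - y| ^ α) (nhds x) (nhds 0) := by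
    have h1 : Tendsto (fun y : ℝ => |x - y|) (nhds x) (nhds 0) := by
      have h0 : Tendsto (fun y : ℝ => x - y) (nhds x) (nhds (x - x)) :=
        tendsto_const_nhds.sub tendsto_id
      simpa using h0.abs
    have h2 : ContinuousAt (fun t : ℝ => t ^ α) 0 :=
      Real.continuousAt_rpow_const 0 α (Or.inr hα.le)
    have h3 : Tendsto (fun y : ℝ => |x - y| ^ α) (nhds x) (nhds 0) := by
      have := h2.tendsto.comp h1
      simpa [Real.zero_rpow (ne_of_gt hα), Function.comp_def] using this
    simpa using h3.const_mul (C x)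
  refine squeeze_zero' (Eventually.of_forall fun y => dist_nonneg) ?_ hb
  have hev : ∀ᶠ y in nhds x, |x - y| ≤ 1 := by
    filter_upwards [Metric.closedBall_mem_nhds x one_pos] with y hy
    rw [Metric.mem_closedBall, Real.dist_eq] at hy
    rwa [abs_sub_comm]
  filter_upwards [hev] with y hy
  rw [Real.dist_eq, abs_sub_comm]
  exact h x y hy

set_option maxHeartbeats 1000000 in
/-- Compact embedding `𝒞^{α₂}_{δ₂}(ℝ) ↪ 𝒞^{α₁}_{δ₁}(ℝ)` for `0 < α₁ < α₂ ≤ 1` and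
`1 > δ₁ > δ₂ > 0`: every sequence of continuous functions bounded in `𝒞^{α₂}_{δ₂}` has a
subsequence converging in the `𝒞^{α₁}_{δ₁}` norm (to a limit in the space). -/
theorem stmt_10 (α₁ α₂ δ₁ δ₂ : ℝ)
    (hα : 0 < α₁ ∧ α₁ < α₂ ∧ α₂ ≤ 1) (hδ : 1 > δ₁ ∧ δ₁ > δ₂ ∧ δ₂ > 0)
    (f : ℕ → ℝ → ℝ) (hcont : ∀ n, Continuous (f n))
    (M : ℝ) (hbdd : ∀ n, InWeightedHolder α₂ δ₂ M (f n)) :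
    ∃ (φ : ℕ → ℕ), StrictMono φ ∧ ∃ g : ℝ → ℝ, Continuous g ∧
      (∃ M' : ℝ, InWeightedHolder α₁ δ₁ M' g) ∧
      ∀ ε > (0 : ℝ), ∃ N : ℕ, ∀ n ≥ N,
        InWeightedHolder α₁ δ₁ ε (fun x => f (φ n) x - g x) := by
  obtain ⟨hα₁, hα₁₂, hα₂1⟩ := hα
  obtain ⟨hδ₁1, hδ₂₁, hδ₂0⟩ := hδ
  have hα₂ : 0 < α₂ := hα₁.trans hα₁₂
  have hδ₁0 : 0 < δ₁ := hδ₂0.trans hδ₂₁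
  have hM : 0 ≤ M := by
    have h := (hbdd 0).1 0
    simp [Real.one_rpow] at h
    exact (abs_nonneg _).trans h
  -- Step A: extract a subsequence converging pointwise at all rationals.
  have hScpt : IsCompact (Set.univ.pi fun q : ℚ =>
      Set.Icc (-(M * (1 + |(q:ℝ)|) ^ δ₂)) (M * (1 + |(q:ℝ)|) ^ δ₂)) :=
    isCompact_univ_pi fun _ => isCompact_Icc
  obtain ⟨s, -, φ, hφ, hsT⟩ := hScpt.tendsto_subseq (x := fun n (q : ℚ) => f n (q : ℝ))
    (fun n => Set.mem_univ_pi.mpr fun q => Set.mem_Icc.mpr (abs_le.mp ((hbdd n).1 q)))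
  have hsq : ∀ q : ℚ, Tendsto (fun n => f (φ n) (q : ℝ)) atTop (nhds (s q)) := by
    intro q
    exact tendsto_pi_nhds.mp hsT q
  -- Step B: pointwise Cauchy everywhere.
  have key_cauchy : ∀ x : ℝ, CauchySeq (fun n => f (φ n) x) := by
    intro x
    rw [Metric.cauchySeq_iff]
    intro ε hε
    obtain ⟨h, hh0, hh1, hhs⟩ :=
      exists_small α₂ (M * (1 + |x|) ^ δ₂) (ε / 4) hα₂ (by positivity) (by positivity)
    obtain ⟨q, hq1, hq2⟩ := exists_rat_btwn (show x - h < x by linarith)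
    have hxq : |x - (q : ℝ)| ≤ h := by rw [abs_le]; constructor <;> linarith
    have hhold : ∀ n : ℕ, |f n x - f n q| ≤ ε / 4 := by
      intro n
      calc |f n x - f n q| ≤ M * (1 + |x|) ^ δ₂ * |x - (q:ℝ)| ^ α₂ :=
            (hbdd n).2 x q (hxq.trans hh1)
        _ ≤ M * (1 + |x|) ^ δ₂ * h ^ α₂ := by
            apply mul_le_mul_of_nonneg_left _ (by positivity)
            exact Real.rpow_le_rpow (abs_nonneg _) hxq hα₂.le
        _ ≤ ε / 4 := hhs
    obtain ⟨N, hN⟩ := Metric.cauchySeq_iff.mp (hsq q).cauchySeq (ε / 4) (by positivity)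
    refine ⟨N, fun m hm n hn => ?_⟩
    have h1 := hhold (φ m)
    have h2 := hhold (φ n)
    have h3 := hN m hm n hn
    rw [Real.dist_eq] at h3 ⊢
    calc |f (φ m) x - f (φ n) x| ≤
        |f (φ m) x - f (φ m) q| + |f (φ m) q - f (φ n) q| + |f (φ n) q - f (φ n) x| := by
          have := abs_sub_le (f (φ m) x) (f (φ m) q) (f (φ n) x)
          have := abs_sub_le (f (φ m) q) (f (φ n) q) (f (φ n) x)
          linarith [abs_sub_le (f (φ m) x) (f (φ m) q) (f (φ n) x),
            abs_sub_le (f (φ m) q) (f (φ n) q) (f (φ n) x)]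
      _ < ε := by
          have h2' : |f (φ n) (q:ℝ) - f (φ n) x| ≤ ε / 4 := by
            rw [abs_sub_comm]; exact h2
          linarith
  set g : ℝ → ℝ := fun x => limUnder atTop (fun n => f (φ n) x) with hgdef
  have hg : ∀ x : ℝ, Tendsto (fun n => f (φ n) x) atTop (nhds (g x)) :=
    fun x => (key_cauchy x).tendsto_limUnder
  -- g inherits the bounds.
  have hgb : ∀ x : ℝ, |g x| ≤ M * (1 + |x|) ^ δ₂ := fun x =>
    le_of_tendsto (hg x).abs (Eventually.of_forall fun n => (hbdd (φ n)).1 x)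
  have hgh : ∀ x y : ℝ, |x - y| ≤ 1 → |g x - g y| ≤ M * (1 + |x|) ^ δ₂ * |x - y| ^ α₂ :=
    fun x y hxy => le_of_tendsto ((hg x).sub (hg y)).abs
      (Eventually.of_forall fun n => (hbdd (φ n)).2 x y hxy)
  have hgcont : Continuous g :=
    continuous_of_holder hα₂ (fun x => M * (1 + |x|) ^ δ₂) hgh
  have hgIW : InWeightedHolder α₁ δ₁ M g := by
    constructor
    · intro x
      exact (hgb x).trans (mul_le_mul_of_nonneg_left (w_mono x hδ₂₁.le) hM)
    · intro x y hxy
      calc |g x - g y| ≤ M * (1 + |x|) ^ δ₂ * |x - y| ^ α₂ := hgh x y hxy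
        _ ≤ M * (1 + |x|) ^ δ₁ * |x - y| ^ α₁ := by
            apply mul_le_mul
            · exact mul_le_mul_of_nonneg_left (w_mono x hδ₂₁.le) hM
            · exact rpow_le_exp_ge (abs_nonneg _) hxy hα₁ hα₁₂.le
            · positivity
            · positivity
  -- Step C: uniform convergence on compacts.
  have hU : ∀ R : ℝ, 0 < R → ∀ ε : ℝ, 0 < ε → ∃ N : ℕ, ∀ n ≥ N, ∀ x : ℝ, |x| ≤ R →
      |f (φ n) x - g x| ≤ ε := by
    intro R hR ε hε
    obtain ⟨h, hh0, hh1, hhs⟩ :=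
      exists_small α₂ (M * (2 + R) ^ δ₂) (ε / 3) hα₂ (by positivity) (by positivity)
    obtain ⟨hq, hq0, hqh⟩ := exists_rat_btwn hh0
    set K : ℤ := ⌈R / (hq : ℝ)⌉ + 1 with hK
    set Q : Finset ℚ := (Finset.Icc (-K) K).image (fun j : ℤ => (j : ℚ) * hq) with hQ
    have hev : ∀ᶠ n in atTop, ∀ q ∈ Q, |f (φ n) (q : ℝ) - g q| ≤ ε / 3 := by
      rw [eventually_all_finset]
      intro q _
      obtain ⟨N', hN'⟩ := Metric.tendsto_atTop.mp (hg (q:ℝ)) (ε/3) (by positivity)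
      filter_upwards [eventually_ge_atTop N'] with n hn
      have := hN' n hn
      rw [Real.dist_eq] at this
      exact this.le
    obtain ⟨N, hN⟩ := eventually_atTop.mp hev
    refine ⟨N, fun n hn x hx => ?_⟩
    set j : ℤ := ⌊x / (hq : ℝ)⌋ with hj
    set q : ℚ := (j : ℚ) * hq with hqq
    have hqcast : ((q : ℚ) : ℝ) = (j : ℝ) * (hq : ℝ) := by rw [hqq]; push_cast; ring
    have hjle : (j : ℝ) * (hq : ℝ) ≤ x := by
      have := Int.floor_le (x / (hq : ℝ))
      calc (j : ℝ) * (hq : ℝ) ≤ (x / (hq : ℝ)) * (hq : ℝ) :=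
            mul_le_mul_of_nonneg_right this hq0.le
        _ = x := div_mul_cancel₀ x (ne_of_gt hq0)
    have hjgt : x < ((j : ℝ) + 1) * (hq : ℝ) := by
      have := Int.lt_floor_add_one (x / (hq : ℝ))
      calc x = (x / (hq : ℝ)) * (hq : ℝ) := (div_mul_cancel₀ x (ne_of_gt hq0)).symm
        _ < ((j : ℝ) + 1) * (hq : ℝ) := by
            apply mul_lt_mul_of_pos_right _ hq0
            exact_mod_cast this
    have hxq : |x - (q : ℝ)| ≤ h := by
      rw [hqcast, abs_le]
      constructor
      · nlinarith [hjle, hh0.le]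
      · nlinarith [hjgt, hqh, hq0.le]
    have hceil : R ≤ ((⌈R / (hq : ℝ)⌉ : ℤ) : ℝ) * (hq : ℝ) := by
      have h3 : (R / (hq : ℝ)) ≤ ((⌈R / (hq : ℝ)⌉ : ℤ) : ℝ) := Int.le_ceil _
      calc R = (R / (hq : ℝ)) * (hq : ℝ) := (div_mul_cancel₀ R (ne_of_gt hq0)).symm
        _ ≤ ((⌈R / (hq : ℝ)⌉ : ℤ) : ℝ) * (hq : ℝ) := mul_le_mul_of_nonneg_right h3 hq0.le
    have hxlow : -R ≤ x := (abs_le.mp hx).1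
    have hxhigh : x ≤ R := (abs_le.mp hx).2
    have hqmem : q ∈ Q := by
      rw [hQ]
      apply Finset.mem_image.mpr
      refine ⟨j, ?_, rfl⟩
      rw [Finset.mem_Icc]
      constructor
      · have hmul : ((-K : ℤ) : ℝ) * (hq : ℝ) ≤ (j : ℝ) * (hq : ℝ) := by
          have : ((-K : ℤ) : ℝ) = -(((⌈R / (hq : ℝ)⌉ : ℤ) : ℝ) + 1) := by
            rw [hK]; push_cast; ring
          rw [this]
          nlinarith [hceil, hjgt, hxlow]
        have := le_of_mul_le_mul_right hmul hq0
        exact_mod_cast this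
      · have hmul : (j : ℝ) * (hq : ℝ) ≤ ((K : ℤ) : ℝ) * (hq : ℝ) := by
          have hKc : ((K : ℤ) : ℝ) = ((⌈R / (hq : ℝ)⌉ : ℤ) : ℝ) + 1 := by
            rw [hK]; push_cast; ring
          rw [hKc]
          nlinarith [hceil, hjle, hxhigh, hq0.le]
        have := le_of_mul_le_mul_right hmul hq0
        exact_mod_cast this
    have hqabs : |(q : ℝ)| ≤ R + 1 := by
      have := abs_sub_abs_le_abs_sub (q : ℝ) x
      rw [abs_sub_comm] at hxq
      linarith [hxq, hx, hh1, abs_nonneg (x - (q:ℝ))]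
    have hwx : (1 + |x|) ^ δ₂ ≤ (2 + R) ^ δ₂ :=
      Real.rpow_le_rpow (by positivity) (by linarith) hδ₂0.le
    have hwq : (1 + |(q:ℝ)|) ^ δ₂ ≤ (2 + R) ^ δ₂ :=
      Real.rpow_le_rpow (by positivity) (by linarith) hδ₂0.le
    have hpow : |x - (q:ℝ)| ^ α₂ ≤ h ^ α₂ :=
      Real.rpow_le_rpow (abs_nonneg _) hxq hα₂.le
    have hb1 : |f (φ n) x - f (φ n) q| ≤ ε / 3 := by
      calc |f (φ n) x - f (φ n) q| ≤ M * (1 + |x|) ^ δ₂ * |x - (q:ℝ)| ^ α₂ :=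
            (hbdd (φ n)).2 x q (hxq.trans hh1)
        _ ≤ M * (2 + R) ^ δ₂ * h ^ α₂ := by
            apply mul_le_mul (mul_le_mul_of_nonneg_left hwx hM) hpow (by positivity)
            positivity
        _ ≤ ε / 3 := hhs
    have hb3 : |g q - g x| ≤ ε / 3 := by
      have hqx : |(q:ℝ) - x| ≤ 1 := by rw [abs_sub_comm]; exact hxq.trans hh1
      calc |g q - g x| ≤ M * (1 + |(q:ℝ)|) ^ δ₂ * |(q:ℝ) - x| ^ α₂ := hgh q x hqx
        _ ≤ M * (2 + R) ^ δ₂ * h ^ α₂ := by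
            apply mul_le_mul (mul_le_mul_of_nonneg_left hwq hM) _ (by positivity) (by positivity)
            rw [abs_sub_comm]; exact hpow
        _ ≤ ε / 3 := hhs
    have hb2 : |f (φ n) q - g q| ≤ ε / 3 := hN n hn q hqmem
    calc |f (φ n) x - g x| ≤
        |f (φ n) x - f (φ n) q| + |f (φ n) q - g q| + |g q - g x| := by
          linarith [abs_sub_le (f (φ n) x) (f (φ n) q) (g x),
            abs_sub_le (f (φ n) q) (g (q:ℝ)) (g x)]
      _ ≤ ε := by linarith
  -- Step D: weighted uniform convergence.
  have hS : ∀ ε : ℝ, 0 < ε → ∃ N : ℕ, ∀ n ≥ N, ∀ x : ℝ,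
      |f (φ n) x - g x| ≤ ε * (1 + |x|) ^ δ₁ := by
    intro ε hε
    set p : ℝ := δ₁ - δ₂ with hp
    have hp0 : 0 < p := by simp [hp]; linarith
    set R : ℝ := ((2 * M + 1) / ε) ^ p⁻¹ with hR
    have hR0 : 0 < R := Real.rpow_pos_of_pos (by positivity) _
    have hRp : (2 * M + 1) ≤ ε * (1 + R) ^ p := by
      have h1 : R ^ p = (2 * M + 1) / ε := Real.rpow_inv_rpow (by positivity) (ne_of_gt hp0)
      have h2 : R ^ p ≤ (1 + R) ^ p :=
        Real.rpow_le_rpow hR0.le (by linarith) hp0.le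
      calc (2 * M + 1) = ε * ((2 * M + 1) / ε) := by field_simp
        _ = ε * R ^ p := by rw [h1]
        _ ≤ ε * (1 + R) ^ p := mul_le_mul_of_nonneg_left h2 hε.le
    obtain ⟨N, hN⟩ := hU R hR0 ε hε
    refine ⟨N, fun n hn x => ?_⟩
    by_cases hx : |x| ≤ R
    · calc |f (φ n) x - g x| ≤ ε := hN n hn x hx
        _ = ε * 1 := (mul_one ε).symm
        _ ≤ ε * (1 + |x|) ^ δ₁ :=
          mul_le_mul_of_nonneg_left (one_le_w x δ₁ hδ₁0.le) hε.le
    · push_neg at hx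
      have hb : |f (φ n) x - g x| ≤ 2 * M * (1 + |x|) ^ δ₂ := by
        have h1 := (hbdd (φ n)).1 x
        have h2 := hgb x
        calc |f (φ n) x - g x| ≤ |f (φ n) x| + |g x| := abs_sub _ _
          _ ≤ 2 * M * (1 + |x|) ^ δ₂ := by linarith
      have hsplit : (1 + |x|) ^ δ₁ = (1 + |x|) ^ δ₂ * (1 + |x|) ^ p := by
        rw [← Real.rpow_add (by positivity)]
        congr 1
        simp [hp]
      have hmono : (1 + R) ^ p ≤ (1 + |x|) ^ p :=
        Real.rpow_le_rpow (by positivity) (by linarith) hp0.le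
      have htail : 2 * M ≤ ε * (1 + |x|) ^ p := by
        calc 2 * M ≤ 2 * M + 1 := by linarith
          _ ≤ ε * (1 + R) ^ p := hRp
          _ ≤ ε * (1 + |x|) ^ p := mul_le_mul_of_nonneg_left hmono hε.le
      calc |f (φ n) x - g x| ≤ 2 * M * (1 + |x|) ^ δ₂ := hb
        _ ≤ (ε * (1 + |x|) ^ p) * (1 + |x|) ^ δ₂ :=
          mul_le_mul_of_nonneg_right htail (by positivity)
        _ = ε * (1 + |x|) ^ δ₁ := by rw [hsplit]; ring
  -- Assemble.
  refine ⟨φ, hφ, g, hgcont, ⟨M, hgIW⟩, ?_⟩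
  intro ε hε
  obtain ⟨θ, hθ0, hθ1, hθs⟩ :=
    exists_small (α₂ - α₁) (2 * M) ε (by linarith) (by linarith) hε
  have hθα : (0:ℝ) < θ ^ α₁ := Real.rpow_pos_of_pos hθ0 _
  have hθα1 : θ ^ α₁ ≤ 1 := Real.rpow_le_one hθ0.le hθ1 hα₁.le
  set ε' : ℝ := ε * θ ^ α₁ / 3 with hε'def
  have hε'0 : 0 < ε' := by positivity
  have hε'ε : ε' ≤ ε := by
    rw [hε'def]
    nlinarith
  obtain ⟨N, hN⟩ := hS ε' hε'0
  refine ⟨N, fun n hn => ⟨?_, ?_⟩⟩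
  · intro x
    exact (hN n hn x).trans (mul_le_mul_of_nonneg_right hε'ε (by positivity))
  · intro x y hxy
    by_cases ht : |x - y| ≤ θ
    · -- small gap: use Hölder bounds of f and g
      have h1 : |f (φ n) x - f (φ n) y| ≤ M * (1 + |x|) ^ δ₂ * |x - y| ^ α₂ :=
        (hbdd (φ n)).2 x y hxy
      have h2 : |g x - g y| ≤ M * (1 + |x|) ^ δ₂ * |x - y| ^ α₂ := hgh x y hxy
      have hsplit : |x - y| ^ α₂ = |x - y| ^ α₁ * |x - y| ^ (α₂ - α₁) := by
        rw [← Real.rpow_add' (abs_nonneg _) (by simp; linarith)]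
        congr 1
        ring
      have hle : |x - y| ^ (α₂ - α₁) ≤ θ ^ (α₂ - α₁) :=
        Real.rpow_le_rpow (abs_nonneg _) ht (by linarith)
      have hw : (1 + |x|) ^ δ₂ ≤ (1 + |x|) ^ δ₁ := w_mono x hδ₂₁.le
      have key : 2 * M * ((1 + |x|) ^ δ₂ * |x - y| ^ α₂) ≤
          ε * (1 + |x|) ^ δ₁ * |x - y| ^ α₁ := by
        rw [hsplit]
        have e1 : 2 * M * ((1 + |x|) ^ δ₂ * (|x - y| ^ α₁ * |x - y| ^ (α₂ - α₁))) =
            (2 * M * |x - y| ^ (α₂ - α₁)) * ((1 + |x|) ^ δ₂ * |x - y| ^ α₁) := by ring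
        rw [e1]
        have e2 : (2 * M * |x - y| ^ (α₂ - α₁)) ≤ ε := by
          calc 2 * M * |x - y| ^ (α₂ - α₁) ≤ 2 * M * θ ^ (α₂ - α₁) :=
                mul_le_mul_of_nonneg_left hle (by linarith)
            _ ≤ ε := hθs
        have e3 : (1 + |x|) ^ δ₂ * |x - y| ^ α₁ ≤ (1 + |x|) ^ δ₁ * |x - y| ^ α₁ :=
          mul_le_mul_of_nonneg_right hw (by positivity)
        calc (2 * M * |x - y| ^ (α₂ - α₁)) * ((1 + |x|) ^ δ₂ * |x - y| ^ α₁) ≤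
              ε * ((1 + |x|) ^ δ₂ * |x - y| ^ α₁) := by
              apply mul_le_mul_of_nonneg_right e2
              positivity
          _ ≤ ε * ((1 + |x|) ^ δ₁ * |x - y| ^ α₁) :=
              mul_le_mul_of_nonneg_left e3 hε.le
          _ = ε * (1 + |x|) ^ δ₁ * |x - y| ^ α₁ := by ring
      calc |f (φ n) x - g x - (f (φ n) y - g y)| =
            |(f (φ n) x - f (φ n) y) - (g x - g y)| := by ring_nf
        _ ≤ |f (φ n) x - f (φ n) y| + |g x - g y| := abs_sub _ _
        _ ≤ 2 * M * ((1 + |x|) ^ δ₂ * |x - y| ^ α₂) := by linarith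
        _ ≤ ε * (1 + |x|) ^ δ₁ * |x - y| ^ α₁ := key
    · -- large gap: use the weighted sup bound
      push_neg at ht
      have hθt : θ ^ α₁ ≤ |x - y| ^ α₁ :=
        Real.rpow_le_rpow hθ0.le ht.le hα₁.le
      have hy : |y| ≤ |x| + 1 := by
        have := abs_sub_abs_le_abs_sub y x
        rw [abs_sub_comm] at this
        linarith
      have hwy : (1 + |y|) ^ δ₁ ≤ 2 * (1 + |x|) ^ δ₁ := by
        calc (1 + |y|) ^ δ₁ ≤ (2 * (1 + |x|)) ^ δ₁ :=
              Real.rpow_le_rpow (by positivity) (by linarith [abs_nonneg x]) hδ₁0.le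
          _ = 2 ^ δ₁ * (1 + |x|) ^ δ₁ := Real.mul_rpow (by norm_num) (by positivity)
          _ ≤ 2 * (1 + |x|) ^ δ₁ := by
              apply mul_le_mul_of_nonneg_right _ (by positivity)
              calc (2:ℝ) ^ δ₁ ≤ 2 ^ (1:ℝ) :=
                    Real.rpow_le_rpow_of_exponent_le one_le_two hδ₁1.le
                _ = 2 := Real.rpow_one 2
      have hΔx := hN n hn x
      have hΔy := hN n hn y
      calc |f (φ n) x - g x - (f (φ n) y - g y)| ≤
            |f (φ n) x - g x| + |f (φ n) y - g y| := abs_sub _ _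
        _ ≤ ε' * (1 + |x|) ^ δ₁ + ε' * (1 + |y|) ^ δ₁ := by linarith
        _ ≤ ε' * (1 + |x|) ^ δ₁ + ε' * (2 * (1 + |x|) ^ δ₁) := by
            have := mul_le_mul_of_nonneg_left hwy hε'0.le
            linarith
        _ = 3 * ε' * (1 + |x|) ^ δ₁ := by ring
        _ = ε * θ ^ α₁ * (1 + |x|) ^ δ₁ := by rw [hε'def]; ring
        _ ≤ ε * |x - y| ^ α₁ * (1 + |x|) ^ δ₁ := by
            apply mul_le_mul_of_nonneg_right _ (by positivity)
            exact mul_le_mul_of_nonneg_left hθt hε.le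
        _ = ε * (1 + |x|) ^ δ₁ * |x - y| ^ α₁ := by ring
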